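/- Let V be a homogeneous linear subspace of polynomials over a finite field F and R ∈ ℕ, and let V^↑ denote the homogeneous component of V of top degree deg(V) (the subspace of V consisting of 0 together with the forms in V of degree deg(V) = max_{X ∈ V} deg(X)). Then U_R(V) = V if and only if U_R(V^↑) = V^↑. -/

import Mathlib

open MvPolynomial
open scoped BigOperators

namespace PaperDefs

variable (F : Type) [Field F] [Fintype F] [DecidableEq F]

/-- A multivariate polynomial is *reduced* if every variable occurs with degree at most `|F| - 1`.
Over a finite field, every function `F^n → F` has a unique reduced polynomial representative. -/
def ReducedPoly {n : ℕ} (P : MvPolynomial (Fin n) F) : Prop :=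
  ∀ i, P.degreeOf i ≤ Fintype.card F - 1

/-- `P` represents the function `f`. -/
def Represents {n : ℕ} (P : MvPolynomial (Fin n) F) (f : (Fin n → F) → F) : Prop :=
  ∀ x, MvPolynomial.eval x P = f x

/-- Degree of a polynomial function: total degree of its (unique) reduced representative. -/
noncomputable def degF {n : ℕ} (f : (Fin n → F) → F) : ℕ :=
  sInf {d | ∃ P : MvPolynomial (Fin n) F, ReducedPoly F P ∧ Represents F P f ∧ P.totalDegree = d}

/-- `f` is a form (homogeneous polynomial function) of degree `d ≥ 1`. -/
def IsFormOfDegree {n : ℕ} (f : (Fin n → F) → F) (d : ℕ) : Prop :=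
  0 < d ∧ ∃ P : MvPolynomial (Fin n) F, P ≠ 0 ∧ ReducedPoly F P ∧
    P.IsHomogeneous d ∧ Represents F P f

/-- `f` is a form: a homogeneous polynomial function of positive degree. -/
def IsForm {n : ℕ} (f : (Fin n → F) → F) : Prop := ∃ d, IsFormOfDegree F f d

/-- A function is non-constant. -/
def NonConstantFn {α β : Type*} (f : α → β) : Prop := ¬ ∃ c, ∀ x, f x = c

/-- A polynomial function is reducible if it is a product of two non-constant polynomial
functions. -/
def ReduciblePoly {n : ℕ} (f : (Fin n → F) → F) : Prop :=
  ∃ g h : (Fin n → F) → F, NonConstantFn g ∧ NonConstantFn h ∧ ∀ x, f x = g x * h x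

/-- Rank of a form of degree `d`: the least `r` such that the form is a sum of `r` reducible
forms of degree `d`; `∞` for `d ≤ 1`. -/
noncomputable def rkFormD {n : ℕ} (d : ℕ) (f : (Fin n → F) → F) : ℕ∞ :=
  if d ≤ 1 then ⊤ else
    sInf {r : ℕ∞ | ∃ k : ℕ, r = (k : ℕ∞) ∧ ∃ R : Fin k → (Fin n → F) → F,
      (∀ i, IsFormOfDegree F (R i) d ∧ ReduciblePoly F (R i)) ∧ ∀ x, f x = ∑ i, R i x}

/-- Rank of a general polynomial function: the rank of the highest-degree homogeneous part of
its reduced representative (`0` for constants). -/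
noncomputable def rkFun {n : ℕ} (f : (Fin n → F) → F) : ℕ∞ :=
  sInf {r : ℕ∞ | ∃ P : MvPolynomial (Fin n) F, ReducedPoly F P ∧ Represents F P f ∧
    r = if P.totalDegree = 0 then 0 else
      rkFormD F P.totalDegree
        (fun x => MvPolynomial.eval x ((MvPolynomial.homogeneousComponent P.totalDegree) P))}

/-- `U_R(V)`: the span of the polynomials in `V` of rank less than `R`. -/
noncomputable def lowRankSpan {n : ℕ} (V : Submodule F ((Fin n → F) → F)) (R : ℕ) :
    Submodule F ((Fin n → F) → F) :=
  Submodule.span F {f | f ∈ V ∧ rkFun F f < (R : ℕ∞)}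

/-- Degree of a subspace of polynomial functions: the largest degree of any of its members. -/
noncomputable def degSub {n : ℕ} (W : Submodule F ((Fin n → F) → F)) : ℕ :=
  sSup (degF F '' (W : Set ((Fin n → F) → F)))

/-- A subspace of polynomial functions is homogeneous if it is spanned by forms. -/
def IsHomogeneousSub {n : ℕ} (W : Submodule F ((Fin n → F) → F)) : Prop :=
  ∃ S : Set ((Fin n → F) → F), (∀ f ∈ S, IsForm F f) ∧ W = Submodule.span F S

/-- `V^↑`: the top-degree homogeneous component of `V` (the subspace consisting of `0`
together with the forms in `V` of degree `deg(V)`). -/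
noncomputable def topComponent {n : ℕ} (V : Submodule F ((Fin n → F) → F)) :
    Submodule F ((Fin n → F) → F) :=
  Submodule.span F {f | f ∈ V ∧ IsFormOfDegree F f (degSub F V)}

/-- `f ∈ F[X]`: `f` is a polynomial expression in `X₁, …, X_k`. -/
def InAlg {n k : ℕ} (X : Fin k → (Fin n → F) → F) (f : (Fin n → F) → F) : Prop :=
  ∃ G : MvPolynomial (Fin k) F, ∀ x, MvPolynomial.eval (fun i => X i x) G = f x

/-- `Pr[X = y]` over a uniformly random input of `F^n`. -/
noncomputable def prEq {n k : ℕ} (X : Fin k → (Fin n → F) → F) (y : Fin k → F) : ℝ :=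
  (Nat.card {x : Fin n → F // ∀ i, X i x = y i} : ℝ) / (Fintype.card F : ℝ) ^ n

/-- `Pr[X ∈ S]` over a uniformly random input of `F^n`. -/
noncomputable def prMem {n k : ℕ} (X : Fin k → (Fin n → F) → F) (S : Set (Fin k → F)) : ℝ :=
  (Nat.card {x : Fin n → F // (fun i => X i x) ∈ S} : ℝ) / (Fintype.card F : ℝ) ^ n

/-- A tuple `X = (X₀, X₁, …, X_k)` of forms is weak `ε`-regular: `X₀` has maximal degree and
for every `y`, `|Pr[X = y] - q⁻¹ Pr[X' = y']| ≤ ε q^{-(k+1)}`, where `X' = (X₁, …, X_k)`. -/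
def WeakRegular {n k : ℕ} (ε : ℝ) (X : Fin (k + 1) → (Fin n → F) → F) : Prop :=
  (∀ i, IsForm F (X i)) ∧
  (∀ i, degF F (X i) ≤ degF F (X 0)) ∧
  ∀ y : Fin (k + 1) → F,
    |prEq F X y -
      (Fintype.card F : ℝ)⁻¹ * prEq F (fun i : Fin k => X i.succ) (fun i : Fin k => y i.succ)|
      ≤ ε / (Fintype.card F : ℝ) ^ (k + 1)

/-- The bias of a polynomial function with respect to an additive character `χ`. -/
noncomputable def biasF {n : ℕ} (χ : AddChar F ℂ) (f : (Fin n → F) → F) : ℂ :=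
  (∑ x : Fin n → F, χ (f x)) / (Fintype.card F : ℂ) ^ n

/-- A tuple of forms `X = (X₁, …, X_r)` is `t`-rank-regular: every element of `Span(X)`
outside of some strict subspace has rank at least `t · r`. -/
def RankRegular {n r : ℕ} (t : ℕ) (X : Fin r → (Fin n → F) → F) : Prop :=
  ∃ U : Submodule F ((Fin n → F) → F), U < Submodule.span F (Set.range X) ∧
    ∀ f ∈ Submodule.span F (Set.range X), f ∉ U → ((t * r : ℕ) : ℕ∞) ≤ rkFun F f

/-- `P ⊆ F[X]` is a minimal decomposition: no strict subspace of `Span(X)` spanned by forms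
generates `P`. -/
def MinimalDecomp {n m r : ℕ} (P : Fin m → (Fin n → F) → F)
    (X : Fin r → (Fin n → F) → F) : Prop :=
  (∀ i, InAlg F X (P i)) ∧
  ∀ (k : ℕ) (Y : Fin k → (Fin n → F) → F), (∀ j, IsForm F (Y j)) →
    Submodule.span F (Set.range Y) < Submodule.span F (Set.range X) →
    ¬ ∀ i, InAlg F Y (P i)

/-- Degree of a univariate polynomial function: the degree of its reduced representative
(in which the variable has degree at most `|F| - 1`). -/
noncomputable def degU (u : F → F) : ℕ :=
  sInf {d | ∃ p : Polynomial F, p.natDegree ≤ Fintype.card F - 1 ∧ (∀ x, p.eval x = u x) ∧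
    p.natDegree = d}

/-- Univariate degree of a polynomial map `P : F^n → F^m`: the minimum degree of a
non-constant univariate polynomial curve whose image is contained in the image of `P`
(`∞` if no such curve exists, e.g. for constant maps). -/
noncomputable def udeg {n m : ℕ} (P : Fin m → (Fin n → F) → F) : ℕ∞ :=
  sInf {d : ℕ∞ | ∃ U : Fin m → F → F,
    NonConstantFn (fun t => fun i => U i t) ∧
    Set.range (fun t => fun i => U i t) ⊆ Set.range (fun x => fun i => P i x) ∧
    d = ((Finset.univ.sup fun i => degU F (U i) : ℕ) : ℕ∞)}

/-- Univariate degree of a single polynomial function `P : F^n → F`. -/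
noncomputable def udeg1 {n : ℕ} (f : (Fin n → F) → F) : ℕ∞ :=
  sInf {d : ℕ∞ | ∃ u : F → F, NonConstantFn u ∧ Set.range u ⊆ Set.range f ∧
    d = ((degU F u : ℕ) : ℕ∞)}

/-- `f` is `t`-reducible: a product of polynomial functions each of degree at most `t`. -/
def TReducible {n : ℕ} (t : ℝ) (f : (Fin n → F) → F) : Prop :=
  ∃ (s : ℕ) (g : Fin s → (Fin n → F) → F), (∀ j, (degF F (g j) : ℝ) ≤ t) ∧
    ∀ x, f x = ∏ j, g j x

/-- The line in `F^(k+1)` through `z` in direction `e₁`. -/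
def lineE1 {k : ℕ} (z : Fin (k + 1) → F) : Set (Fin (k + 1) → F) :=
  {y | ∃ t : F, y = t • (Pi.single (0 : Fin (k + 1)) (1 : F) : Fin (k + 1) → F) + z}

/-!
Let `D = deg V` and let `π` send a polynomial function to the degree-`D` homogeneous part of
its reduced representative. For homogeneous `V`, `π` maps `V` onto `V^↑` and fixes `V^↑`
pointwise. It kills the members of `V` of degree `< D` and sends those of degree `D` to their
top form, which has the same rank; hence `π (U_R(V)) ⊆ U_R(V^↑)`, and `U_R(V) = V` gives
`V^↑ = π V ⊆ U_R(V^↑)`. Conversely, if `U_R(V^↑) = V^↑ ≠ 0`, pick a nonzero `h ∈ V^↑` of rank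
`< R`. Every `f ∈ V` is `(f - π f + h) + (π f - h)`: the first summand has top form `h`, hence
rank `< R`, and the second lies in `V^↑ = U_R(V^↑) ⊆ U_R(V)`.
-/

section Polynomial

variable {σ R : Type*} [CommSemiring R]

theorem homogeneousComponent_mem_restrictDegree {P : MvPolynomial σ R} {m : ℕ}
    (hP : P ∈ restrictDegree σ R m) (d : ℕ) :
    homogeneousComponent d P ∈ restrictDegree σ R m := by
  rw [mem_restrictDegree, support_homogeneousComponent] at *
  exact fun s hs => hP s (Finset.mem_filter.1 hs).1

theorem homogeneousComponent_totalDegree_ne_zero {P : MvPolynomial σ R} (hP : P ≠ 0) :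
    homogeneousComponent P.totalDegree P ≠ 0 := by
  obtain ⟨s, hs, hdeg⟩ := P.support.exists_mem_eq_sup (support_nonempty.2 hP) Finsupp.degree
  rw [← support_nonempty, support_homogeneousComponent]
  exact ⟨s, Finset.mem_filter.2 ⟨hs, hdeg.symm⟩⟩

end Polynomial

section Representative

variable {K : Type} [Field K] [Fintype K] {n : ℕ}

noncomputable def reducedPolyEquiv :
    restrictDegree (Fin n) K (Fintype.card K - 1) ≃ₗ[K] ((Fin n → K) → K) :=
  LinearEquiv.ofBijective (evalᵢ (Fin n) K)
    ⟨LinearMap.ker_eq_bot.1 (ker_evalₗ (Fin n) K),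
      LinearMap.range_eq_top.1 (range_evalᵢ (Fin n) K)⟩

noncomputable def reducedRep : ((Fin n → K) → K) →ₗ[K] MvPolynomial (Fin n) K :=
  (restrictDegree (Fin n) K (Fintype.card K - 1)).subtype ∘ₗ reducedPolyEquiv.symm.toLinearMap

theorem reducedRep_mem_restrictDegree (f : (Fin n → K) → K) :
    reducedRep f ∈ restrictDegree (Fin n) K (Fintype.card K - 1) :=
  (reducedPolyEquiv.symm f).2

theorem evalₗ_reducedRep (f : (Fin n → K) → K) : evalₗ K (Fin n) (reducedRep f) = f :=
  reducedPolyEquiv.apply_symm_apply f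

theorem reducedRep_evalₗ {P : MvPolynomial (Fin n) K}
    (hP : P ∈ restrictDegree (Fin n) K (Fintype.card K - 1)) :
    reducedRep (evalₗ K (Fin n) P) = P :=
  congrArg Subtype.val (reducedPolyEquiv.symm_apply_apply ⟨P, hP⟩)

theorem reducedRep_injective :
    Function.Injective (reducedRep : ((Fin n → K) → K) → MvPolynomial (Fin n) K) :=
  fun f g h => by rw [← evalₗ_reducedRep f, h, evalₗ_reducedRep]

theorem reducedRep_ne_zero_iff {f : (Fin n → K) → K} : reducedRep f ≠ 0 ↔ f ≠ 0 :=
  map_ne_zero_iff reducedRep reducedRep_injective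

theorem reducedPoly_iff_mem_restrictDegree {P : MvPolynomial (Fin n) K} :
    ReducedPoly K P ↔ P ∈ restrictDegree (Fin n) K (Fintype.card K - 1) := by
  simp only [ReducedPoly, mem_restrictDegree, degreeOf_le_iff]
  exact ⟨fun h s hs i => h i s hs, fun h i s hs => h s hs i⟩

theorem reducedPoly_and_represents_iff {P : MvPolynomial (Fin n) K} {f : (Fin n → K) → K} :
    ReducedPoly K P ∧ Represents K P f ↔ P = reducedRep f := by
  rw [reducedPoly_iff_mem_restrictDegree]
  constructor
  · rintro ⟨hP, hPf⟩
    rw [← reducedRep_evalₗ hP]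
    exact congrArg reducedRep (funext hPf)
  · rintro rfl
    exact ⟨reducedRep_mem_restrictDegree f, fun x => congrFun (evalₗ_reducedRep f) x⟩

theorem degF_eq_totalDegree_reducedRep (f : (Fin n → K) → K) :
    degF K f = (reducedRep f).totalDegree := by
  simp only [degF, ← and_assoc, reducedPoly_and_represents_iff, exists_eq_left,
    Set.ofPred_eq_eq_singleton', csInf_singleton]

theorem isFormOfDegree_iff {f : (Fin n → K) → K} {d : ℕ} :
    IsFormOfDegree K f d ↔ 0 < d ∧ f ≠ 0 ∧ (reducedRep f).IsHomogeneous d := by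
  refine and_congr_right fun _ => ⟨?_, ?_⟩
  · rintro ⟨P, hP0, hP, hPd, hPf⟩
    obtain rfl := reducedPoly_and_represents_iff.1 ⟨hP, hPf⟩
    exact ⟨fun hf => hP0 (by rw [hf, map_zero]), hPd⟩
  · rintro ⟨hf, hd⟩
    obtain ⟨hP, hPf⟩ := reducedPoly_and_represents_iff.2 (rfl : reducedRep f = reducedRep f)
    exact ⟨reducedRep f, reducedRep_ne_zero_iff.2 hf, hP, hd, hPf⟩

theorem IsFormOfDegree.degF_eq {f : (Fin n → K) → K} {d : ℕ} (hf : IsFormOfDegree K f d) :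
    degF K f = d := by
  obtain ⟨-, hf0, hd⟩ := isFormOfDegree_iff.1 hf
  rw [degF_eq_totalDegree_reducedRep]
  exact hd.totalDegree (reducedRep_ne_zero_iff.2 hf0)

noncomputable def homogeneousPart (d : ℕ) : ((Fin n → K) → K) →ₗ[K] (Fin n → K) → K :=
  evalₗ K (Fin n) ∘ₗ homogeneousComponent d ∘ₗ reducedRep

theorem reducedRep_homogeneousPart (d : ℕ) (f : (Fin n → K) → K) :
    reducedRep (homogeneousPart d f) = homogeneousComponent d (reducedRep f) :=
  reducedRep_evalₗ (homogeneousComponent_mem_restrictDegree (reducedRep_mem_restrictDegree f) d)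

theorem degF_zero : degF K (0 : (Fin n → K) → K) = 0 := by
  rw [degF_eq_totalDegree_reducedRep, map_zero, totalDegree_zero]

theorem homogeneousPart_of_isHomogeneous {f : (Fin n → K) → K} {e : ℕ}
    (hf : (reducedRep f).IsHomogeneous e) (d : ℕ) :
    homogeneousPart d f = if d = e then f else 0 := by
  apply reducedRep_injective
  rw [reducedRep_homogeneousPart, homogeneousComponent_of_mem hf, apply_ite reducedRep, map_zero]

theorem homogeneousPart_homogeneousPart (d : ℕ) (f : (Fin n → K) → K) :
    homogeneousPart d (homogeneousPart d f) = homogeneousPart d f := by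
  have hhom : (reducedRep (homogeneousPart d f)).IsHomogeneous d := by
    rw [reducedRep_homogeneousPart]
    exact homogeneousComponent_isHomogeneous d _
  rw [homogeneousPart_of_isHomogeneous hhom, if_pos rfl]

theorem homogeneousPart_of_isFormOfDegree {f : (Fin n → K) → K} {e : ℕ}
    (hf : IsFormOfDegree K f e) (d : ℕ) : homogeneousPart d f = if d = e then f else 0 :=
  homogeneousPart_of_isHomogeneous (isFormOfDegree_iff.1 hf).2.2 d

theorem homogeneousPart_eq_zero_of_degF_lt {f : (Fin n → K) → K} {d : ℕ} (hf : degF K f < d) :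
    homogeneousPart d f = 0 := by
  apply reducedRep_injective
  rw [reducedRep_homogeneousPart, map_zero, homogeneousComponent_eq_zero]
  rwa [← degF_eq_totalDegree_reducedRep]

theorem homogeneousPart_degF_ne_zero {f : (Fin n → K) → K} (hf : f ≠ 0) :
    homogeneousPart (degF K f) f ≠ 0 := by
  rw [← reducedRep_ne_zero_iff, reducedRep_homogeneousPart, degF_eq_totalDegree_reducedRep]
  exact homogeneousComponent_totalDegree_ne_zero (reducedRep_ne_zero_iff.2 hf)

theorem degF_eq_of_homogeneousPart_eq_self {f : (Fin n → K) → K} {d : ℕ}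
    (hfd : homogeneousPart d f = f) (hf : f ≠ 0) : degF K f = d := by
  have hhom : (reducedRep f).IsHomogeneous d := by
    rw [← hfd, reducedRep_homogeneousPart]
    exact homogeneousComponent_isHomogeneous d _
  rw [degF_eq_totalDegree_reducedRep]
  exact hhom.totalDegree (reducedRep_ne_zero_iff.2 hf)

theorem degF_homogeneousPart_degF (f : (Fin n → K) → K) :
    degF K (homogeneousPart (degF K f) f) = degF K f := by
  rcases eq_or_ne f 0 with rfl | hf
  · rw [map_zero]
  · exact degF_eq_of_homogeneousPart_eq_self (homogeneousPart_homogeneousPart _ f)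
      (homogeneousPart_degF_ne_zero hf)

theorem degF_add_of_degF_lt {f g : (Fin n → K) → K} (h : degF K g < degF K f) :
    degF K (f + g) = degF K f := by
  simp only [degF_eq_totalDegree_reducedRep] at h ⊢
  rw [map_add, totalDegree_add_eq_left_of_totalDegree_lt h]

theorem degF_sub_le (f g : (Fin n → K) → K) : degF K (f - g) ≤ max (degF K f) (degF K g) := by
  simp only [degF_eq_totalDegree_reducedRep, map_sub, totalDegree_sub]

theorem degF_homogeneousPart_le (d : ℕ) (f : (Fin n → K) → K) :
    degF K (homogeneousPart d f) ≤ d := by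
  rw [degF_eq_totalDegree_reducedRep, reducedRep_homogeneousPart]
  exact (homogeneousComponent_isHomogeneous d _).totalDegree_le

theorem degF_sub_homogeneousPart_lt {f : (Fin n → K) → K} {d : ℕ} (hf : degF K f ≤ d)
    (hd : 0 < d) : degF K (f - homogeneousPart d f) < d := by
  set g := f - homogeneousPart d f
  rcases eq_or_ne g 0 with hg | hg
  · rwa [hg, degF_zero]
  have hgd : homogeneousPart d g = 0 := by
    rw [map_sub, homogeneousPart_homogeneousPart, sub_self]
  have hle : degF K g ≤ d :=
    (degF_sub_le f _).trans (max_le hf (degF_homogeneousPart_le d f))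
  exact hle.lt_of_ne fun h => homogeneousPart_degF_ne_zero hg (h ▸ hgd)

theorem rkFun_eq (f : (Fin n → K) → K) : rkFun K f =
    if degF K f = 0 then 0 else rkFormD K (degF K f) (homogeneousPart (degF K f) f) := by
  simp only [rkFun, reducedPoly_and_represents_iff, ← and_assoc, exists_eq_left,
    Set.ofPred_eq_eq_singleton, csInf_singleton, degF_eq_totalDegree_reducedRep]
  rfl

theorem rkFun_homogeneousPart_degF (f : (Fin n → K) → K) :
    rkFun K (homogeneousPart (degF K f) f) = rkFun K f := by
  rw [rkFun_eq, rkFun_eq f, degF_homogeneousPart_degF, homogeneousPart_homogeneousPart]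

theorem rkFun_add_of_degF_lt {f g : (Fin n → K) → K} (h : degF K g < degF K f) :
    rkFun K (f + g) = rkFun K f := by
  rw [rkFun_eq, rkFun_eq f, degF_add_of_degF_lt h, map_add,
    homogeneousPart_eq_zero_of_degF_lt h, add_zero]

end Representative

section Subspace

variable {K : Type} [Field K] [Fintype K] {n : ℕ} {V W : Submodule K ((Fin n → K) → K)}

theorem degF_le_degSub {f : (Fin n → K) → K} (hf : f ∈ V) : degF K f ≤ degSub K V :=
  le_csSup (Set.toFinite _).bddAbove ⟨f, hf, rfl⟩

theorem exists_degF_eq_degSub (V : Submodule K ((Fin n → K) → K)) :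
    ∃ f ∈ V, degF K f = degSub K V :=
  Nat.sSup_mem ⟨_, Set.mem_image_of_mem _ V.zero_mem⟩ (Set.toFinite _).bddAbove

theorem IsHomogeneousSub.homogeneousPart_mem (hV : IsHomogeneousSub K V) (d : ℕ)
    {f : (Fin n → K) → K} (hf : f ∈ V) : homogeneousPart d f ∈ V := by
  obtain ⟨S, hS, rfl⟩ := hV
  refine (Submodule.span_le (p := (Submodule.span K S).comap (homogeneousPart d)).2
    (fun s hs => ?_)) hf
  obtain ⟨e, he⟩ := hS s hs
  rw [SetLike.mem_coe, Submodule.mem_comap, homogeneousPart_of_isFormOfDegree he]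
  split_ifs
  exacts [Submodule.subset_span hs, zero_mem _]

theorem IsHomogeneousSub.degSub_pos (hV : IsHomogeneousSub K V) (hbot : V ≠ ⊥) :
    0 < degSub K V := by
  obtain ⟨S, hS, rfl⟩ := hV
  obtain ⟨s, hs⟩ : S.Nonempty :=
    Set.nonempty_iff_ne_empty.2 fun h => hbot (by rw [h, Submodule.span_empty])
  obtain ⟨e, he⟩ := hS s hs
  exact he.1.trans_le (he.degF_eq ▸ degF_le_degSub (Submodule.subset_span hs))

theorem topComponent_le (V : Submodule K ((Fin n → K) → K)) : topComponent K V ≤ V :=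
  Submodule.span_le.2 fun _ hf => hf.1

theorem IsHomogeneousSub.topComponent_eq_map (hV : IsHomogeneousSub K V) :
    topComponent K V = V.map (homogeneousPart (degSub K V)) := by
  refine le_antisymm (Submodule.span_le.2 fun f ⟨hfV, hf⟩ => ⟨f, hfV, ?_⟩) ?_
  · rw [homogeneousPart_of_isFormOfDegree hf, if_pos rfl]
  rw [Submodule.map_le_iff_le_comap]
  intro f hf
  rcases eq_or_ne (homogeneousPart (degSub K V) f) 0 with h0 | h0
  · rw [Submodule.mem_comap, h0]
    exact zero_mem _
  have hpos : 0 < degSub K V :=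
    hV.degSub_pos fun hbot => h0 (by rw [hbot, Submodule.mem_bot] at hf; rw [hf, map_zero])
  refine Submodule.subset_span ⟨hV.homogeneousPart_mem _ hf, isFormOfDegree_iff.2
    ⟨hpos, h0, ?_⟩⟩
  rw [reducedRep_homogeneousPart]
  exact homogeneousComponent_isHomogeneous _ _

theorem IsHomogeneousSub.homogeneousPart_eq_self_of_mem_topComponent
    (hV : IsHomogeneousSub K V) {f : (Fin n → K) → K} (hf : f ∈ topComponent K V) :
    homogeneousPart (degSub K V) f = f := by
  rw [hV.topComponent_eq_map] at hf
  obtain ⟨g, -, rfl⟩ := hf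
  exact homogeneousPart_homogeneousPart _ g

theorem IsHomogeneousSub.topComponent_ne_bot (hV : IsHomogeneousSub K V) (hbot : V ≠ ⊥) :
    topComponent K V ≠ ⊥ := by
  obtain ⟨f, hfV, hfd⟩ := exists_degF_eq_degSub V
  have hf : f ≠ 0 := fun h => (hV.degSub_pos hbot).ne' (by rw [← hfd, h, degF_zero])
  rw [hV.topComponent_eq_map, Ne, Submodule.eq_bot_iff]
  push Not
  exact ⟨_, Submodule.mem_map_of_mem hfV, hfd ▸ homogeneousPart_degF_ne_zero hf⟩

theorem lowRankSpan_le (V : Submodule K ((Fin n → K) → K)) (R : ℕ) :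
    lowRankSpan K V R ≤ V :=
  Submodule.span_le.2 fun _ hf => hf.1

theorem lowRankSpan_mono (h : W ≤ V) (R : ℕ) : lowRankSpan K W R ≤ lowRankSpan K V R :=
  Submodule.span_mono fun _ hf => ⟨h hf.1, hf.2⟩

theorem exists_ne_zero_rkFun_lt_of_lowRankSpan_ne_bot {R : ℕ} (h : lowRankSpan K V R ≠ ⊥) :
    ∃ f ∈ V, f ≠ 0 ∧ rkFun K f < R := by
  contrapose! h
  exact Submodule.span_eq_bot.2 fun f hf => by_contra fun h0 => not_lt.2 (h f hf.1 h0) hf.2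

theorem IsHomogeneousSub.map_lowRankSpan_le (hV : IsHomogeneousSub K V) (R : ℕ) :
    (lowRankSpan K V R).map (homogeneousPart (degSub K V)) ≤
      lowRankSpan K (topComponent K V) R := by
  rw [lowRankSpan, Submodule.map_span, Submodule.span_le]
  rintro _ ⟨g, ⟨hgV, hgR⟩, rfl⟩
  rcases (degF_le_degSub hgV).eq_or_lt with hdeg | hdeg
  · refine Submodule.subset_span
      ⟨hV.topComponent_eq_map ▸ Submodule.mem_map_of_mem hgV, ?_⟩
    rwa [← hdeg, rkFun_homogeneousPart_degF]
  · rw [SetLike.mem_coe, homogeneousPart_eq_zero_of_degF_lt hdeg]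
    exact zero_mem _

theorem IsHomogeneousSub.sub_homogeneousPart_add_mem_lowRankSpan (hV : IsHomogeneousSub K V)
    {R : ℕ} {f h : (Fin n → K) → K} (hf : f ∈ V) (hT : h ∈ topComponent K V) (h0 : h ≠ 0)
    (hR : rkFun K h < R) : f - homogeneousPart (degSub K V) f + h ∈ lowRankSpan K V R := by
  have hpos : 0 < degSub K V :=
    hV.degSub_pos fun hbot => h0 ((Submodule.mem_bot K).1 (hbot ▸ topComponent_le V hT))
  have hdeg : degF K h = degSub K V :=
    degF_eq_of_homogeneousPart_eq_self (hV.homogeneousPart_eq_self_of_mem_topComponent hT) h0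
  have hlt : degF K (f - homogeneousPart (degSub K V) f) < degF K h := by
    rw [hdeg]
    exact degF_sub_homogeneousPart_lt (degF_le_degSub hf) hpos
  refine Submodule.subset_span
    ⟨add_mem (sub_mem hf (hV.homogeneousPart_mem _ hf)) (topComponent_le V hT), ?_⟩
  rwa [add_comm, rkFun_add_of_degF_lt hlt]

end Subspace

/-- For a homogeneous subspace `V`, one has `U_R(V) = V` if and only if
`U_R(V^↑) = V^↑`, where `V^↑` is the top-degree homogeneous component of `V`. -/
theorem lowRankSpan_eq_iff_topComponent (n R : ℕ) (V : Submodule F ((Fin n → F) → F))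
    (hV : IsHomogeneousSub F V) :
    lowRankSpan F V R = V ↔ lowRankSpan F (topComponent F V) R = topComponent F V := by
  constructor
  · intro h
    refine le_antisymm (lowRankSpan_le _ R) ?_
    calc topComponent F V = V.map (homogeneousPart (degSub F V)) := hV.topComponent_eq_map
      _ = (lowRankSpan F V R).map (homogeneousPart (degSub F V)) := by rw [h]
      _ ≤ lowRankSpan F (topComponent F V) R := hV.map_lowRankSpan_le R
  · intro h
    refine le_antisymm (lowRankSpan_le V R) fun f hf => ?_
    rcases eq_or_ne V ⊥ with rfl | hbot
    · rw [(Submodule.mem_bot F).1 hf]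
      exact zero_mem _
    obtain ⟨h₀, hT, h0, hR⟩ :=
      exists_ne_zero_rkFun_lt_of_lowRankSpan_ne_bot (h ▸ hV.topComponent_ne_bot hbot)
    have hTU : topComponent F V ≤ lowRankSpan F V R :=
      h ▸ lowRankSpan_mono (topComponent_le V) R
    have hπf : homogeneousPart (degSub F V) f ∈ topComponent F V :=
      hV.topComponent_eq_map ▸ Submodule.mem_map_of_mem hf
    have hsplit : f = (f - homogeneousPart (degSub F V) f + h₀) +
        (homogeneousPart (degSub F V) f - h₀) := by abel
    rw [hsplit]
    exact add_mem (hV.sub_homogeneousPart_add_mem_lowRankSpan hf hT h0 hR)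
      (hTU (sub_mem hπf hT))

end PaperDefs
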